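/- arXiv:2207.09125 — 2 statements merged into one kernel-verified Lean document; each statement's English description precedes it below -/
import Mathlib

section
/- Let s, q ∈ ℍ with s ∉ [q]. Then for each i = 1, 2, 3 the partial derivative of the left slice hyperholomorphic Cauchy kernel along the direction e_i satisfies: ∂_{q_i} S_L^{-1}(s,q) = e_i Q_{c,s}(q)^{-1} + (q_i/2) F_L(s,q), where q_i is the i-th imaginary component of q. -/
noncomputable section

open scoped Quaternion
open Finset

/-- The imaginary units `e₁, e₂, e₃` of the quaternions `ℍ = ℍ[ℝ]`. -/
def e1 : ℍ[ℝ] := ⟨0, 1, 0, 0⟩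
def e2 : ℍ[ℝ] := ⟨0, 0, 1, 0⟩
def e3 : ℍ[ℝ] := ⟨0, 0, 0, 1⟩

/-- The (left) Fueter operator `Df = ∂_{q₀}f + e₁∂_{q₁}f + e₂∂_{q₂}f + e₃∂_{q₃}f`,
where the partial derivatives are the directional derivatives along `1, e₁, e₂, e₃`. -/
def Dop (f : ℍ[ℝ] → ℍ[ℝ]) (q : ℍ[ℝ]) : ℍ[ℝ] :=
  fderiv ℝ f q 1 + e1 * fderiv ℝ f q e1 + e2 * fderiv ℝ f q e2 + e3 * fderiv ℝ f q e3

/-- The (left) conjugate Fueter operator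
`D̄f = ∂_{q₀}f − e₁∂_{q₁}f − e₂∂_{q₂}f − e₃∂_{q₃}f`. -/
def Dbar (f : ℍ[ℝ] → ℍ[ℝ]) (q : ℍ[ℝ]) : ℍ[ℝ] :=
  fderiv ℝ f q 1 - e1 * fderiv ℝ f q e1 - e2 * fderiv ℝ f q e2 - e3 * fderiv ℝ f q e3

/-- The right Fueter operator `fD = ∂_{q₀}f + (∂_{q₁}f)e₁ + (∂_{q₂}f)e₂ + (∂_{q₃}f)e₃`. -/
def DopR (f : ℍ[ℝ] → ℍ[ℝ]) (q : ℍ[ℝ]) : ℍ[ℝ] :=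
  fderiv ℝ f q 1 + fderiv ℝ f q e1 * e1 + fderiv ℝ f q e2 * e2 + fderiv ℝ f q e3 * e3

/-- The right conjugate Fueter operator
`fD̄ = ∂_{q₀}f − (∂_{q₁}f)e₁ − (∂_{q₂}f)e₂ − (∂_{q₃}f)e₃`. -/
def DbarR (f : ℍ[ℝ] → ℍ[ℝ]) (q : ℍ[ℝ]) : ℍ[ℝ] :=
  fderiv ℝ f q 1 - fderiv ℝ f q e1 * e1 - fderiv ℝ f q e2 * e2 - fderiv ℝ f q e3 * e3

/-- The Laplacian in the four real variables `q₀, q₁, q₂, q₃`. -/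
def Lap (f : ℍ[ℝ] → ℍ[ℝ]) (q : ℍ[ℝ]) : ℍ[ℝ] :=
  fderiv ℝ (fun p => fderiv ℝ f p 1) q 1 + fderiv ℝ (fun p => fderiv ℝ f p e1) q e1 +
    fderiv ℝ (fun p => fderiv ℝ f p e2) q e2 + fderiv ℝ (fun p => fderiv ℝ f p e3) q e3

/-- `s ∈ [q]`: membership in the 2-sphere
`[q] = {p : Re(p) = Re(q), |Im(p)| = |Im(q)|}` of `q`. -/
def inSphereOf (s q : ℍ[ℝ]) : Prop := s.re = q.re ∧ ‖s.im‖ = ‖q.im‖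

/-- `Q_{c,s}(q) = s² − 2 Re(q) s + |q|²`. -/
def Qc (s q : ℍ[ℝ]) : ℍ[ℝ] := s ^ 2 - 2 * (q.re : ℍ[ℝ]) * s + ((‖q‖ ^ 2 : ℝ) : ℍ[ℝ])

/-- The left slice hyperholomorphic Cauchy kernel `S_L^{-1}(s,q) = (s − q̄) Q_{c,s}(q)⁻¹`. -/
def SL (s q : ℍ[ℝ]) : ℍ[ℝ] := (s - star q) * (Qc s q)⁻¹

/-- The right slice hyperholomorphic Cauchy kernel `S_R^{-1}(s,q) = Q_{c,s}(q)⁻¹ (s − q̄)`. -/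
def SR (s q : ℍ[ℝ]) : ℍ[ℝ] := (Qc s q)⁻¹ * (s - star q)

/-- The left `F`-kernel `F_L(s,q) = −4 (s − q̄) Q_{c,s}(q)^{-2}`. -/
def FL (s q : ℍ[ℝ]) : ℍ[ℝ] := -4 * (s - star q) * ((Qc s q)⁻¹) ^ 2

/-- The right `F`-kernel `F_R(s,q) = −4 Q_{c,s}(q)^{-2} (s − q̄)`. -/
def FR (s q : ℍ[ℝ]) : ℍ[ℝ] := -4 * ((Qc s q)⁻¹) ^ 2 * (s - star q)

/-- The Clifford–Appell polynomials
`Q_ℓ(q,q̄) = (2/((ℓ+1)(ℓ+2))) Σ_{j=0}^{ℓ} (ℓ−j+1) q^{ℓ−j} q̄^j`. -/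
def QA (ℓ : ℕ) (q : ℍ[ℝ]) : ℍ[ℝ] :=
  ((2 : ℝ) / ((ℓ + 1) * (ℓ + 2))) •
    ∑ j ∈ Finset.range (ℓ + 1), ((ℓ - j + 1 : ℕ) : ℍ[ℝ]) * q ^ (ℓ - j) * (star q) ^ j

/-! Along a direction `v` with `v̄ = -v`, the derivative of
`Q_{c,s}(p) = s² - (p + p̄) s + p p̄` at `q` is `v q̄ - q v = 2⟨v, q⟩`, a real number. It therefore
commutes with everything, and `d(Q⁻¹) = -Q⁻¹ dQ Q⁻¹` turns the product rule for `(s - p̄) Q⁻¹` into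
`v Q⁻¹ - 2⟨v, q⟩ (s - q̄) Q⁻² = v Q⁻¹ + (⟨v, q⟩ / 2) F_L`; for `v = e_i` one has `⟨v, q⟩ = q_i`.
That `Q_{c,s}(q) ≠ 0` for `s ∉ [q]` is read off from
`Q_{c,s}(q) = ((s₀ - q₀)² + |q⃗|² - |s⃗|²) + 2 (s₀ - q₀) s⃗`. -/

instance : StarModule ℝ ℍ[ℝ] := ⟨fun r x => by ext <;> simp⟩

lemma Quaternion.sq_norm_eq_sum_sq (q : ℍ[ℝ]) :
    ‖q‖ ^ 2 = q.re ^ 2 + q.imI ^ 2 + q.imJ ^ 2 + q.imK ^ 2 := by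
  rw [sq, ← Quaternion.normSq_eq_norm_mul_self, Quaternion.normSq_def']

lemma Qc_eq_re_add_im (s q : ℍ[ℝ]) :
    Qc s q = (((s.re - q.re) ^ 2 + ‖q.im‖ ^ 2 - ‖s.im‖ ^ 2 : ℝ) : ℍ[ℝ]) +
      (2 * (s.re - q.re)) • s.im := by
  rw [Qc, Quaternion.sq_norm_eq_sum_sq, Quaternion.sq_norm_eq_sum_sq,
    Quaternion.sq_norm_eq_sum_sq, show (2 : ℍ[ℝ]) = ((2 : ℝ) : ℍ[ℝ]) by norm_cast]
  ext <;> simp [sq] <;> ring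

lemma Qc_ne_zero {s q : ℍ[ℝ]} (h : ¬ inSphereOf s q) : Qc s q ≠ 0 := by
  intro h0
  rw [Qc_eq_re_add_im] at h0
  have hre : (s.re - q.re) ^ 2 + ‖q.im‖ ^ 2 - ‖s.im‖ ^ 2 = 0 := by
    simpa only [Quaternion.re_add, Quaternion.re_coe, Quaternion.re_smul, Quaternion.re_im,
      smul_zero, add_zero, Quaternion.re_zero] using congrArg (fun x : ℍ[ℝ] => x.re) h0
  have him : (2 * (s.re - q.re)) • s.im = 0 := by
    simpa only [Quaternion.im_add, Quaternion.im_coe, Quaternion.im_smul, Quaternion.im_idem,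
      zero_add, Quaternion.im_zero] using congrArg (fun x : ℍ[ℝ] => x.im) h0
  apply h
  rcases smul_eq_zero.mp him with hd | hs
  · have hsq : ‖s.im‖ ^ 2 = ‖q.im‖ ^ 2 := by nlinarith
    exact ⟨by linarith, (sq_eq_sq₀ (norm_nonneg _) (norm_nonneg _)).mp hsq⟩
  · rw [hs, norm_zero, zero_pow two_ne_zero, sub_zero] at hre
    obtain ⟨hd, hq⟩ := (add_eq_zero_iff_of_nonneg (sq_nonneg _) (sq_nonneg _)).mp hre
    exact ⟨sub_eq_zero.mp (pow_eq_zero_iff two_ne_zero |>.mp hd),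
      by rw [hs, norm_zero, (pow_eq_zero_iff two_ne_zero).mp hq]⟩

lemma Qc_eq_star (s p : ℍ[ℝ]) : Qc s p = s ^ 2 - (p + star p) * s + p * star p := by
  rw [Qc, Quaternion.self_add_star, Quaternion.self_mul_star, sq ‖p‖,
    ← Quaternion.normSq_eq_norm_mul_self]

lemma differentiable_Qc (s : ℍ[ℝ]) : Differentiable ℝ (Qc s) := by
  rw [funext (Qc_eq_star s)]
  fun_prop

lemma fderiv_Qc_apply (s q v : ℍ[ℝ]) :
    fderiv ℝ (Qc s) q v = q * star v + v * star q - (v + star v) * s := by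
  have hid := hasFDerivAt_id (𝕜 := ℝ) q
  have h : HasFDerivAt (Qc s) _ q :=
    ((((hid.add hid.star).mul_const' s).const_sub (s ^ 2)).add
      (hid.mul' hid.star)).congr_of_eventuallyEq (.of_forall (Qc_eq_star s))
  rw [h.fderiv]
  simp only [ContinuousLinearMap.comp_id, smul_add, neg_add_rev, id_eq, MulOpposite.op_star,
    add_apply, neg_apply, smul_apply, ContinuousLinearEquiv.coe_coe, starL'_apply,
    MulOpposite.smul_eq_mul_unop, MulOpposite.unop_op, ContinuousLinearMap.id_apply, smul_eq_mul,
    MulOpposite.unop_star]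
  noncomm_ring

lemma fderiv_SL_apply {s q : ℍ[ℝ]} (hQ : Qc s q ≠ 0) (v : ℍ[ℝ]) :
    fderiv ℝ (SL s) q v =
      -star v * (Qc s q)⁻¹ - (s - star q) * ((Qc s q)⁻¹ * fderiv ℝ (Qc s) q v * (Qc s q)⁻¹) := by
  have hinv := (hasFDerivAt_inv' (𝕜 := ℝ) hQ).comp q (differentiable_Qc s q).hasFDerivAt
  have h : HasFDerivAt (SL s) _ q := ((hasFDerivAt_id (𝕜 := ℝ) q).star.const_sub s).mul' hinv
  rw [h.fderiv]
  simp only [id_eq, ContinuousLinearMap.neg_comp, smul_neg, MulOpposite.op_inv,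
    ContinuousLinearMap.comp_id, add_apply, neg_apply, smul_apply, ContinuousLinearMap.comp_apply,
    ContinuousLinearMap.mulLeftRight_apply, smul_eq_mul, ContinuousLinearEquiv.coe_coe,
    starL'_apply, MulOpposite.smul_eq_mul_unop, MulOpposite.unop_inv, MulOpposite.unop_op, neg_mul]
  abel

lemma Quaternion.mul_star_sub_mul_of_star_eq_neg {v : ℍ[ℝ]} (hv : star v = -v) (q : ℍ[ℝ]) :
    v * star q - q * v = ((2 * inner ℝ v q : ℝ) : ℍ[ℝ]) := by
  have hre : v.re = 0 := Quaternion.star_eq_neg.mp hv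
  ext <;> simp [Quaternion.inner_def, hre] <;> ring

theorem fderiv_SL_apply_of_star_eq_neg {s q v : ℍ[ℝ]} (hQ : Qc s q ≠ 0) (hv : star v = -v) :
    fderiv ℝ (SL s) q v = v * (Qc s q)⁻¹ + (inner ℝ v q / 2) • FL s q := by
  have hdQ : fderiv ℝ (Qc s) q v = ((2 * inner ℝ v q : ℝ) : ℍ[ℝ]) := by
    rw [fderiv_Qc_apply, hv, add_neg_cancel, zero_mul, sub_zero, mul_neg, neg_add_eq_sub,
      Quaternion.mul_star_sub_mul_of_star_eq_neg hv]
  rw [fderiv_SL_apply hQ, hdQ, hv, neg_neg, FL, ← Quaternion.coe_commutes,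
    show (-4 : ℍ[ℝ]) = ((-4 : ℝ) : ℍ[ℝ]) by norm_cast]
  simp only [Quaternion.coe_mul_eq_smul, smul_mul_assoc, mul_smul_comm, smul_smul, sq]
  module

lemma inner_e1 (q : ℍ[ℝ]) : inner ℝ e1 q = q.imI := by
  rw [Quaternion.inner_def, Quaternion.re_mul]
  simp [e1]

lemma inner_e2 (q : ℍ[ℝ]) : inner ℝ e2 q = q.imJ := by
  rw [Quaternion.inner_def, Quaternion.re_mul]
  simp [e2]

lemma inner_e3 (q : ℍ[ℝ]) : inner ℝ e3 q = q.imK := by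
  rw [Quaternion.inner_def, Quaternion.re_mul]
  simp [e3]

/-- for `s ∉ [q]` and `i = 1, 2, 3`,
`∂_{q_i} S_L^{-1}(s,q) = e_i Q_{c,s}(q)⁻¹ + (q_i/2) F_L(s,q)`. -/
theorem dqi_SL (s q : ℍ[ℝ]) (h : ¬ inSphereOf s q) :
    (fderiv ℝ (fun p => SL s p) q e1 = e1 * (Qc s q)⁻¹ + (q.imI / 2) • FL s q) ∧
    (fderiv ℝ (fun p => SL s p) q e2 = e2 * (Qc s q)⁻¹ + (q.imJ / 2) • FL s q) ∧
    (fderiv ℝ (fun p => SL s p) q e3 = e3 * (Qc s q)⁻¹ + (q.imK / 2) • FL s q) := by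
  have hQ := Qc_ne_zero h
  refine ⟨?_, ?_, ?_⟩
  · rw [fderiv_SL_apply_of_star_eq_neg hQ (Quaternion.star_eq_neg.mpr rfl), inner_e1]
  · rw [fderiv_SL_apply_of_star_eq_neg hQ (Quaternion.star_eq_neg.mpr rfl), inner_e2]
  · rw [fderiv_SL_apply_of_star_eq_neg hQ (Quaternion.star_eq_neg.mpr rfl), inner_e3]

end
end

section
/- For every integer n ≥ 1 and every q ∈ ℍ, the right and left conjugate Fueter operators agree on the monomial q ↦ qⁿ: (qⁿ)D̄ = D̄(qⁿ), i.e. ∂_{q₀}(qⁿ) − Σ_{i=1}^{3} (∂_{q_i} qⁿ) e_i = ∂_{q₀}(qⁿ) − Σ_{i=1}^{3} e_i (∂_{q_i} qⁿ). -/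
noncomputable section

open scoped Quaternion
open Finset

/- Writing `∂ᵥ(qⁿ) = Σᵢ qⁿ⁻¹⁻ⁱ v qⁱ`, the difference `(qⁿ)D̄ − D̄(qⁿ)` is a sum over `i` of
`Σₖ (eₖ a eₖ) b − a (eₖ b eₖ)` with `a = qⁿ⁻¹⁻ⁱ`, `b = qⁱ`. Since `Σₖ eₖ a eₖ = a − 4 Re a`, each
such term is `4 (Re b · a − Re a · b)`, which is antisymmetric under `i ↦ n − 1 − i`, so the
sum vanishes. -/

theorem Finset.sum_range_sub_reflect {M : Type*} [AddCommGroup M] (f : ℕ → ℕ → M) (n : ℕ) :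
    ∑ i ∈ range n, (f i (n - 1 - i) - f (n - 1 - i) i) = 0 := by
  rw [sum_sub_distrib, sub_eq_zero, ← sum_range_reflect]
  refine sum_congr rfl fun i hi => ?_
  rw [Nat.sub_sub_self (Nat.le_sub_one_of_lt (mem_range.mp hi))]

theorem fderiv_pow_apply {𝕜 𝔸 : Type*} [NontriviallyNormedField 𝕜] [NormedRing 𝔸]
    [NormedAlgebra 𝕜 𝔸] (n : ℕ) (x v : 𝔸) :
    fderiv 𝕜 (fun p => p ^ n) x v = ∑ i ∈ range n, x ^ (n - 1 - i) * v * x ^ i := by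
  simp [fderiv_pow_ring']

theorem imagUnits_sandwich_sum (a : ℍ[ℝ]) :
    e1 * a * e1 + e2 * a * e2 + e3 * a * e3 = a - ((4 * a.re : ℝ) : ℍ[ℝ]) := by
  ext <;>
    simp only [Quaternion.re_add, Quaternion.imI_add, Quaternion.imJ_add, Quaternion.imK_add,
      Quaternion.re_sub, Quaternion.imI_sub, Quaternion.imJ_sub, Quaternion.imK_sub,
      Quaternion.re_mul, Quaternion.imI_mul, Quaternion.imJ_mul, Quaternion.imK_mul] <;>
    simp [e1, e2, e3]
  ring

theorem imagUnits_commutator_sum (a b : ℍ[ℝ]) :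
    (e1 * (a * e1 * b) - a * e1 * b * e1) + (e2 * (a * e2 * b) - a * e2 * b * e2) +
        (e3 * (a * e3 * b) - a * e3 * b * e3) =
      ((4 * b.re : ℝ) : ℍ[ℝ]) * a - ((4 * a.re : ℝ) : ℍ[ℝ]) * b := by
  calc _ = (e1 * a * e1 + e2 * a * e2 + e3 * a * e3) * b -
          a * (e1 * b * e1 + e2 * b * e2 + e3 * b * e3) := by noncomm_ring
    _ = _ := by
      rw [imagUnits_sandwich_sum, imagUnits_sandwich_sum, sub_mul, mul_sub,
        Quaternion.coe_commutes (4 * b.re) a]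
      abel

theorem DbarR_sub_Dbar (f : ℍ[ℝ] → ℍ[ℝ]) (q : ℍ[ℝ]) :
    DbarR f q - Dbar f q =
      (e1 * fderiv ℝ f q e1 - fderiv ℝ f q e1 * e1) + (e2 * fderiv ℝ f q e2 - fderiv ℝ f q e2 * e2) +
        (e3 * fderiv ℝ f q e3 - fderiv ℝ f q e3 * e3) := by
  unfold Dbar DbarR
  abel

theorem DbarR_pow_eq_Dbar_pow_general (n : ℕ) (q : ℍ[ℝ]) :
    DbarR (fun p => p ^ n) q = Dbar (fun p => p ^ n) q := by
  rw [← sub_eq_zero, DbarR_sub_Dbar]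
  simp only [fderiv_pow_apply, mul_sum, sum_mul, ← sum_sub_distrib, ← sum_add_distrib,
    imagUnits_commutator_sum]
  exact sum_range_sub_reflect (fun i j => ((4 * (q ^ i).re : ℝ) : ℍ[ℝ]) * q ^ j) n

/-- for `n ≥ 1`, the right and left conjugate Fueter operators agree on
the monomial `q ↦ qⁿ`: `(qⁿ)D̄ = D̄(qⁿ)`. -/
theorem DbarR_pow_eq_Dbar_pow (n : ℕ) (hn : 1 ≤ n) (q : ℍ[ℝ]) :
    DbarR (fun p => p ^ n) q = Dbar (fun p => p ^ n) q :=
  DbarR_pow_eq_Dbar_pow_general n q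
end
end
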